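/- The 3DM instance p has a solution (a subset S' ⊆ Fin d with |S'| = n on which each of the three coordinate projections of p is injective) if and only if there exists a 3-diverse partition P of the rows of the constructed table T with exactly 3n(d−1) stars. -/

import Mathlib

open scoped Classical

/-- The `k`-th coordinate (`k ∈ Fin 3`) of a 3D point. -/
def coord3 {n : ℕ} (k : Fin 3) (q : Fin n × Fin n × Fin n) : Fin n :=
  if k = 0 then q.1 else if k = 1 then q.2.1 else q.2.2

/-- The QI value of row `r = (k, a)` of the constructed table on attribute `A_i`:
it is `0` if the `k`-th coordinate of `p i` equals `a`, and `u r` otherwise. -/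
def qiT {n d m : ℕ} (p : Fin d → Fin n × Fin n × Fin n)
    (u : Fin 3 × Fin n → Fin (m + 1)) (r : Fin 3 × Fin n) (i : Fin d) : Fin (m + 1) :=
  if coord3 r.1 (p i) = r.2 then 0 else u r

/-- A partition of the row set `Fin 3 × Fin n` into pairwise disjoint nonempty
QI-groups covering all rows. -/
structure RPartition (n : ℕ) where
  groups : Finset (Finset (Fin 3 × Fin n))
  nonempty : ∀ G ∈ groups, G.Nonempty
  pairwiseDisjoint : (groups : Set (Finset (Fin 3 × Fin n))).PairwiseDisjoint id
  covers : ∀ r : Fin 3 × Fin n, ∃ G ∈ groups, r ∈ G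

/-- A group `G` disagrees on attribute `A_i` if two of its rows have different
QI values on `A_i`. -/
def Disagrees3 {n d m : ℕ} (p : Fin d → Fin n × Fin n × Fin n)
    (u : Fin 3 × Fin n → Fin (m + 1)) (G : Finset (Fin 3 × Fin n)) (i : Fin d) : Prop :=
  ∃ r ∈ G, ∃ r' ∈ G, qiT p u r i ≠ qiT p u r' i

/-- A group is useful if there is at least one attribute on which it does not
disagree (i.e., it is not futile). -/
def Useful3 {n d m : ℕ} (p : Fin d → Fin n × Fin n × Fin n)
    (u : Fin 3 × Fin n → Fin (m + 1)) (G : Finset (Fin 3 × Fin n)) : Prop :=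
  ∃ i : Fin d, ¬ Disagrees3 p u G i

/-- A group `G` is 3-eligible if for every sensitive value `v`,
`3` times the number of rows of `G` with sensitive value `v` is at most `|G|`. -/
def Eligible3 {n m : ℕ} (u : Fin 3 × Fin n → Fin (m + 1))
    (G : Finset (Fin 3 × Fin n)) : Prop :=
  ∀ v : Fin (m + 1), 3 * (G.filter (fun r => u r = v)).card ≤ G.card

/-- A partition is 3-diverse if every one of its QI-groups is 3-eligible. -/
def Diverse3 {n m : ℕ} (u : Fin 3 × Fin n → Fin (m + 1)) (P : RPartition n) : Prop :=
  ∀ G ∈ P.groups, Eligible3 u G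

/-- Number of stars of a partition of the constructed table. -/
noncomputable def stars3 {n d m : ℕ} (p : Fin d → Fin n × Fin n × Fin n)
    (u : Fin 3 × Fin n → Fin (m + 1)) (P : RPartition n) : ℕ :=
  ∑ G ∈ P.groups, G.card * (Finset.univ.filter (fun i : Fin d => Disagrees3 p u G i)).card

/-!
A solution `S'` of the 3DM instance gives the 3-diverse partition whose groups are the row triples
`{(k, coord3 k (p i)) | k}` of the points `i ∈ S'`; each such group agrees exactly on the
attribute `A_i`, so it costs `3 (d - 1)` stars. Conversely, a 3-eligible group that agrees on
some attribute `A_i` must share the value `0` there (a common nonzero value would be a common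
sensitive value), so it is the row triple of `p i`; every other group disagrees on all `d`
attributes. Hence `3n(d - 1)` stars force every group to be a row triple, and these triples,
being disjoint and covering the rows, come from a solution.
-/

open Finset

variable {n d m : ℕ}

lemma eq_of_forall_coord3_eq {q q' : Fin n × Fin n × Fin n}
    (h : ∀ k, coord3 k q = coord3 k q') : q = q' := by
  have h0 := h 0; have h1 := h 1; have h2 := h 2
  simp only [coord3, if_pos, if_neg, Fin.reduceEq, not_false_eq_true] at h0 h1 h2
  exact Prod.ext h0 (Prod.ext h1 h2)

def pointRows (p : Fin d → Fin n × Fin n × Fin n) (i : Fin d) : Finset (Fin 3 × Fin n) :=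
  univ.image fun k => (k, coord3 k (p i))

section PointRows

variable {p : Fin d → Fin n × Fin n × Fin n} {u : Fin 3 × Fin n → Fin (m + 1)}

lemma mem_pointRows {i : Fin d} {r : Fin 3 × Fin n} :
    r ∈ pointRows p i ↔ coord3 r.1 (p i) = r.2 := by
  simp only [pointRows, mem_image, mem_univ, true_and]
  exact ⟨by rintro ⟨k, rfl⟩; rfl, fun h => ⟨r.1, Prod.ext rfl h⟩⟩

lemma card_pointRows (i : Fin d) : (pointRows p i).card = 3 := by
  rw [pointRows, card_image_of_injective _ fun _ _ h => congrArg Prod.fst h, card_univ,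
    Fintype.card_fin]

lemma pointRows_injective (hp : Function.Injective p) : Function.Injective (pointRows p) := by
  intro i j h
  refine hp (eq_of_forall_coord3_eq fun k => ?_)
  have : (k, coord3 k (p i)) ∈ pointRows p j := h ▸ mem_pointRows.2 rfl
  exact (mem_pointRows.1 this).symm

lemma qiT_eq_zero_iff (hu0 : ∀ r, u r ≠ 0) {r : Fin 3 × Fin n} {i : Fin d} :
    qiT p u r i = 0 ↔ r ∈ pointRows p i := by
  rw [mem_pointRows, qiT]
  split_ifs with h <;> simp [h, hu0]

lemma qiT_of_notMem {r : Fin 3 × Fin n} {i : Fin d} (h : r ∉ pointRows p i) :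
    qiT p u r i = u r :=
  if_neg (mt mem_pointRows.2 h)

lemma disagrees3_pointRows (hp : Function.Injective p) (hu0 : ∀ r, u r ≠ 0)
    (hudiff : ∀ k k' : Fin 3, ∀ a a' : Fin n, k ≠ k' → u (k, a) ≠ u (k', a'))
    {i j : Fin d} (hji : j ≠ i) : Disagrees3 p u (pointRows p i) j := by
  obtain ⟨k, hk⟩ : ∃ k, coord3 k (p j) ≠ coord3 k (p i) := by
    by_contra! h
    exact hji (hp (eq_of_forall_coord3_eq h))
  obtain ⟨k', hk'⟩ := exists_ne k
  refine ⟨(k, coord3 k (p i)), mem_pointRows.2 rfl, (k', coord3 k' (p i)), mem_pointRows.2 rfl,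
    ?_⟩
  rw [qiT_of_notMem (mt mem_pointRows.1 hk), qiT]
  split_ifs
  · exact hu0 _
  · exact hudiff _ _ _ _ hk'.symm

lemma card_filter_disagrees3_pointRows (hp : Function.Injective p) (hu0 : ∀ r, u r ≠ 0)
    (hudiff : ∀ k k' : Fin 3, ∀ a a' : Fin n, k ≠ k' → u (k, a) ≠ u (k', a'))
    (i : Fin d) : (univ.filter fun j => Disagrees3 p u (pointRows p i) j).card = d - 1 := by
  have hagree : ¬ Disagrees3 p u (pointRows p i) i := by
    rintro ⟨r, hr, r', hr', hne⟩
    exact hne (((qiT_eq_zero_iff hu0).2 hr).trans ((qiT_eq_zero_iff hu0).2 hr').symm)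
  have : (univ.filter fun j => Disagrees3 p u (pointRows p i) j) = univ.erase i := by
    ext j
    simp only [mem_filter, mem_univ, true_and, mem_erase, and_true]
    exact ⟨fun h hji => hagree (hji ▸ h), disagrees3_pointRows hp hu0 hudiff⟩
  rw [this, card_erase_of_mem (mem_univ i), card_univ, Fintype.card_fin]

lemma eligible3_pointRows
    (hudiff : ∀ k k' : Fin 3, ∀ a a' : Fin n, k ≠ k' → u (k, a) ≠ u (k', a'))
    (i : Fin d) : Eligible3 u (pointRows p i) := by
  intro v
  suffices ((pointRows p i).filter fun r => u r = v).card ≤ 1 by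
    rw [card_pointRows]; omega
  refine card_le_one.2 fun ⟨k, a⟩ hr ⟨k', a'⟩ hr' => ?_
  simp only [mem_filter, mem_pointRows] at hr hr'
  obtain rfl : k = k' := by
    by_contra hne
    exact hudiff k k' a a' hne (hr.2.trans hr'.2.symm)
  rw [← hr.1, ← hr'.1]

lemma three_le_card_of_eligible3 {G : Finset (Fin 3 × Fin n)} (hel : Eligible3 u G)
    (hne : G.Nonempty) : 3 ≤ G.card := by
  obtain ⟨r, hr⟩ := hne
  have : 0 < (G.filter fun r' => u r' = u r).card := card_pos.2 ⟨r, mem_filter.2 ⟨hr, rfl⟩⟩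
  have := hel (u r)
  omega

lemma eq_pointRows_of_not_disagrees3 (hu0 : ∀ r, u r ≠ 0) {G : Finset (Fin 3 × Fin n)}
    (hel : Eligible3 u G) (hne : G.Nonempty) {i : Fin d} (hagree : ¬ Disagrees3 p u G i) :
    G = pointRows p i := by
  simp only [Disagrees3, not_exists, not_and, not_not] at hagree
  obtain ⟨r₀, hr₀⟩ := hne
  have hzero : qiT p u r₀ i = 0 := by
    by_contra hc
    have hcommon : ∀ r ∈ G, u r = qiT p u r₀ i := fun r hr => by
      have hnot : r ∉ pointRows p i := fun hm =>
        hc ((hagree r hr r₀ hr₀).symm.trans ((qiT_eq_zero_iff hu0).2 hm))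
      rw [← hagree r hr r₀ hr₀, qiT_of_notMem hnot]
    have := hel (qiT p u r₀ i)
    rw [filter_true_of_mem hcommon] at this
    have := card_pos.2 ⟨r₀, hr₀⟩
    omega
  have hsub : G ⊆ pointRows p i := fun r hr =>
    (qiT_eq_zero_iff hu0).1 ((hagree r hr r₀ hr₀).trans hzero)
  refine eq_of_subset_of_card_le hsub ?_
  rw [card_pointRows]
  exact three_le_card_of_eligible3 hel ⟨r₀, hr₀⟩

lemma exists_eq_pointRows_or_card_filter_disagrees3_eq (hu0 : ∀ r, u r ≠ 0)
    {G : Finset (Fin 3 × Fin n)} (hel : Eligible3 u G) (hne : G.Nonempty) :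
    (∃ i, G = pointRows p i) ∨ (univ.filter fun i => Disagrees3 p u G i).card = d := by
  by_cases h : ∃ i, ¬ Disagrees3 p u G i
  · obtain ⟨i, hi⟩ := h
    exact Or.inl ⟨i, eq_pointRows_of_not_disagrees3 hu0 hel hne hi⟩
  · push Not at h
    rw [filter_true_of_mem fun i _ => h i, card_univ, Fintype.card_fin]
    exact Or.inr rfl

end PointRows

namespace RPartition

variable (P : RPartition n)

lemma sum_card_groups : ∑ G ∈ P.groups, G.card = 3 * n := by
  have hcover : P.groups.biUnion id = univ :=
    eq_univ_of_forall fun r => mem_biUnion.2 (P.covers r)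
  calc ∑ G ∈ P.groups, G.card = (P.groups.biUnion id).card :=
        (card_biUnion P.pairwiseDisjoint).symm
    _ = 3 * n := by rw [hcover, card_univ, Fintype.card_prod, Fintype.card_fin, Fintype.card_fin]

lemma eq_of_mem_of_mem {G G' : Finset (Fin 3 × Fin n)} (hG : G ∈ P.groups)
    (hG' : G' ∈ P.groups) {r : Fin 3 × Fin n} (hr : r ∈ G) (hr' : r ∈ G') : G = G' := by
  by_contra hne
  exact disjoint_left.1 (P.pairwiseDisjoint hG hG' hne) hr hr'

end RPartition

section Reduction

def matchingPartition (p : Fin d → Fin n × Fin n × Fin n) (S : Finset (Fin d))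
    (hcard : S.card = n) (hS : ∀ k : Fin 3, Set.InjOn (fun i => coord3 k (p i)) S) :
    RPartition n where
  groups := S.image (pointRows p)
  nonempty := by
    simp only [mem_image]
    rintro _ ⟨i, -, rfl⟩
    exact ⟨(0, coord3 0 (p i)), mem_pointRows.2 rfl⟩
  pairwiseDisjoint := by
    rintro _ hG _ hG' hne
    simp only [coe_image, Set.mem_image, mem_coe] at hG hG'
    obtain ⟨i, hi, rfl⟩ := hG
    obtain ⟨j, hj, rfl⟩ := hG'
    refine disjoint_left.2 fun r hr hr' => hne ?_
    simp only [id_eq, mem_pointRows] at hr hr'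
    rw [hS r.1 hi hj (hr.trans hr'.symm)]
  covers := by
    rintro ⟨k, a⟩
    have hsurj : S.image (fun i => coord3 k (p i)) = univ :=
      eq_univ_of_card _ (by rw [card_image_of_injOn (hS k), hcard, Fintype.card_fin])
    obtain ⟨i, hi, hia⟩ := mem_image.1 (hsurj ▸ mem_univ a)
    exact ⟨pointRows p i, mem_image_of_mem _ hi, mem_pointRows.2 hia⟩

variable {p : Fin d → Fin n × Fin n × Fin n} {u : Fin 3 × Fin n → Fin (m + 1)}
  {S : Finset (Fin d)} (hcard : S.card = n)
  (hS : ∀ k : Fin 3, Set.InjOn (fun i => coord3 k (p i)) S)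

lemma diverse3_matchingPartition
    (hudiff : ∀ k k' : Fin 3, ∀ a a' : Fin n, k ≠ k' → u (k, a) ≠ u (k', a')) :
    Diverse3 u (matchingPartition p S hcard hS) := by
  intro G hG
  obtain ⟨i, -, rfl⟩ := mem_image.1 hG
  exact eligible3_pointRows hudiff i

lemma stars3_matchingPartition (hp : Function.Injective p) (hu0 : ∀ r, u r ≠ 0)
    (hudiff : ∀ k k' : Fin 3, ∀ a a' : Fin n, k ≠ k' → u (k, a) ≠ u (k', a')) :
    stars3 p u (matchingPartition p S hcard hS) = 3 * n * (d - 1) := by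
  rw [stars3, matchingPartition, sum_image fun i _ j _ h => pointRows_injective hp h]
  simp only [card_pointRows, card_filter_disagrees3_pointRows hp hu0 hudiff, sum_const, hcard,
    smul_eq_mul]
  ring

lemma forall_exists_eq_pointRows_of_stars3_eq (hd : 0 < d) (hp : Function.Injective p)
    (hu0 : ∀ r, u r ≠ 0)
    (hudiff : ∀ k k' : Fin 3, ∀ a a' : Fin n, k ≠ k' → u (k, a) ≠ u (k', a'))
    {P : RPartition n} (hdiv : Diverse3 u P) (hstars : stars3 p u P = 3 * n * (d - 1)) :
    ∀ G ∈ P.groups, ∃ i, G = pointRows p i := by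
  have hlow : ∀ G ∈ P.groups,
      G.card * (d - 1) ≤ G.card * (univ.filter fun i => Disagrees3 p u G i).card := by
    intro G hG
    refine Nat.mul_le_mul_left _ ?_
    rcases exists_eq_pointRows_or_card_filter_disagrees3_eq (p := p) hu0 (hdiv G hG)
      (P.nonempty G hG) with ⟨i, rfl⟩ | h
    · rw [card_filter_disagrees3_pointRows hp hu0 hudiff]
    · omega
  have heq := (sum_eq_sum_iff_of_le hlow).1 <| by
    rw [← sum_mul, P.sum_card_groups, ← hstars]; rfl
  intro G hG
  refine (exists_eq_pointRows_or_card_filter_disagrees3_eq hu0 (hdiv G hG)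
    (P.nonempty G hG)).resolve_right fun h => ?_
  have := Nat.eq_of_mul_eq_mul_left (card_pos.2 (P.nonempty G hG)) (heq G hG)
  omega

lemma card_filter_pointRows_mem (hp : Function.Injective p) {P : RPartition n}
    (hrows : ∀ G ∈ P.groups, ∃ i, G = pointRows p i) :
    (univ.filter fun i => pointRows p i ∈ P.groups).card = n := by
  have himage :
      (univ.filter fun i => pointRows p i ∈ P.groups).image (pointRows p) = P.groups := by
    ext G
    simp only [mem_image, mem_filter, mem_univ, true_and]
    refine ⟨by rintro ⟨i, hi, rfl⟩; exact hi, fun hG => ?_⟩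
    obtain ⟨i, rfl⟩ := hrows G hG
    exact ⟨i, hG, rfl⟩
  have hsum := P.sum_card_groups
  rw [sum_congr rfl (g := fun _ => 3) fun G hG => by
    obtain ⟨i, rfl⟩ := hrows G hG; exact card_pointRows i, sum_const, smul_eq_mul] at hsum
  rw [← card_image_of_injective _ (pointRows_injective hp), himage]
  omega

lemma injOn_coord3_filter_pointRows_mem (hp : Function.Injective p) (P : RPartition n)
    (k : Fin 3) :
    Set.InjOn (fun i => coord3 k (p i))
      (univ.filter fun i => pointRows p i ∈ P.groups : Finset (Fin d)) := by
  intro i hi j hj hij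
  simp only [coe_filter, mem_univ, true_and, Set.mem_ofPred_eq] at hi hj
  exact pointRows_injective hp
    (P.eq_of_mem_of_mem hi hj (r := (k, coord3 k (p i))) (mem_pointRows.2 rfl)
      (mem_pointRows.2 (hij.symm : coord3 k (p j) = coord3 k (p i))))

end Reduction

theorem stmt8_general {n d m : ℕ} (hn : 1 ≤ n) (hnd : n ≤ d)
    (p : Fin d → Fin n × Fin n × Fin n) (hp : Function.Injective p)
    (u : Fin 3 × Fin n → Fin (m + 1))
    (hu0 : ∀ r, u r ≠ 0)
    (hudiff : ∀ k k' : Fin 3, ∀ a a' : Fin n, k ≠ k' → u (k, a) ≠ u (k', a')) :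
    (∃ S' : Finset (Fin d), S'.card = n ∧
        ∀ k : Fin 3, Set.InjOn (fun i => coord3 k (p i)) (S' : Set (Fin d))) ↔
      (∃ P : RPartition n, Diverse3 u P ∧ stars3 p u P = 3 * n * (d - 1)) := by
  constructor
  · rintro ⟨S, hcard, hS⟩
    exact ⟨matchingPartition p S hcard hS, diverse3_matchingPartition hcard hS hudiff,
      stars3_matchingPartition hcard hS hp hu0 hudiff⟩
  · rintro ⟨P, hdiv, hstars⟩
    have hrows := forall_exists_eq_pointRows_of_stars3_eq (hn.trans hnd) hp hu0 hudiff hdiv hstars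
    exact ⟨_, card_filter_pointRows_mem hp hrows, injOn_coord3_filter_pointRows_mem hp P⟩

theorem stmt8 {n d m : ℕ} (hn : 1 ≤ n) (hnd : n ≤ d) (hm3 : 3 ≤ m) (hm : m ≤ 3 * n)
    (p : Fin d → Fin n × Fin n × Fin n) (hp : Function.Injective p)
    (u : Fin 3 × Fin n → Fin (m + 1))
    (hu0 : ∀ r, u r ≠ 0)
    (husurj : ∀ v : Fin (m + 1), v ≠ 0 → ∃ r, u r = v)
    (hudiff : ∀ k k' : Fin 3, ∀ a a' : Fin n, k ≠ k' → u (k, a) ≠ u (k', a')) :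
    (∃ S' : Finset (Fin d), S'.card = n ∧
        ∀ k : Fin 3, Set.InjOn (fun i => coord3 k (p i)) (S' : Set (Fin d))) ↔
      (∃ P : RPartition n, Diverse3 u P ∧ stars3 p u P = 3 * n * (d - 1)) :=
  stmt8_general hn hnd p hp u hu0 hudiff
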